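/- The function f_{n,q,γ}(δ), equal to (q−γ)·(ω_{γ+1}ω_{n−q}/ω_{n−(q−γ)+1})·(ω_{n+1}/(ω_{q+1}ω_{n−q}))·δ^{q−γ−1} for 0 ≤ δ ≤ 1, equal to (q−γ)·(ω_{γ+1}ω_{n−q}/ω_{n−(q−γ)+1})·(1/2)·δ^{q−γ−1}·B(1/δ²;(q+1)/2,(n−q)/2) for δ > 1, and 0 for δ < 0, is a probability density: it is nonnegative and its integral over ℝ equals 1. -/

import Mathlib

open Real MeasureTheory
open Set

/-- Surface area of the unit sphere `S^{n-1}`: `ω_n = 2 π^{n/2} / Γ(n/2)`. -/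
noncomputable def sphereArea (m : ℕ) : ℝ :=
  2 * Real.pi ^ ((m : ℝ) / 2) / Real.Gamma ((m : ℝ) / 2)

/-- Incomplete beta function `B(x; α, β) = ∫₀ˣ t^{α-1} (1-t)^{β-1} dt`. -/
noncomputable def incBeta (x α β : ℝ) : ℝ :=
  ∫ t in (0 : ℝ)..x, t ^ (α - 1) * (1 - t) ^ (β - 1)

lemma betaKer_intInt {α β : ℝ} (hα : 0 < α) (hβ : 0 < β) :
    IntervalIntegrable (fun t : ℝ => t ^ (α - 1) * (1 - t) ^ (β - 1)) volume 0 1 := by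
  have h1 : IntervalIntegrable (fun t : ℝ => t ^ (α - 1) * (1 - t) ^ (β - 1)) volume 0 (1/2) := by
    apply IntervalIntegrable.mul_continuousOn (intervalIntegral.intervalIntegrable_rpow' (by linarith))
    apply ContinuousOn.rpow_const (by fun_prop)
    intro t ht
    rw [uIcc_of_le (by norm_num)] at ht
    left; rw [sub_ne_zero]; intro h; rw [← h] at ht; exact absurd ht.2 (by norm_num)
  have h2 : IntervalIntegrable (fun t : ℝ => t ^ (α - 1) * (1 - t) ^ (β - 1)) volume (1/2) 1 := by
    have base : IntervalIntegrable (fun t : ℝ => (1 - t) ^ (β - 1)) volume (1/2) 1 := by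
      have := (intervalIntegral.intervalIntegrable_rpow' (r := β - 1) (by linarith)).comp_sub_left (a := 0) (b := 1/2) 1
      norm_num at this
      exact this.symm
    have := base.mul_continuousOn (g := fun t : ℝ => t ^ (α - 1)) ?_
    · simpa [mul_comm] using this
    · apply ContinuousOn.rpow_const (by fun_prop)
      intro t ht
      rw [uIcc_of_le (by norm_num)] at ht
      left; intro h; rw [h] at ht; exact absurd ht.1 (by norm_num)
  exact h1.trans h2

lemma incBeta_one_eq {α β : ℝ} (hα : 0 < α) (hβ : 0 < β) :
    incBeta 1 α β = Gamma α * Gamma β / Gamma (α + β) := by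
  have key := Complex.Gamma_mul_Gamma_eq_betaIntegral (s := (α : ℂ)) (t := (β : ℂ))
    (by simpa using hα) (by simpa using hβ)
  have hb : Complex.betaIntegral (α : ℂ) (β : ℂ) = (incBeta 1 α β : ℂ) := by
    rw [Complex.betaIntegral, incBeta, ← intervalIntegral.integral_ofReal]
    apply intervalIntegral.integral_congr
    intro t ht
    rw [uIcc_of_le (by norm_num)] at ht
    simp only
    rw [Complex.ofReal_mul, Complex.ofReal_cpow ht.1, Complex.ofReal_cpow (by linarith [ht.2] : (0:ℝ) ≤ 1 - t)]
    push_cast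
    ring_nf
  rw [hb, ← Complex.ofReal_add, Complex.Gamma_ofReal, Complex.Gamma_ofReal,
    Complex.Gamma_ofReal] at key
  have hG : Gamma (α + β) ≠ 0 := (Real.Gamma_pos_of_pos (by linarith)).ne'
  have key2 : Gamma α * Gamma β = Gamma (α + β) * incBeta 1 α β := by
    exact_mod_cast key
  field_simp
  linarith [key2]

lemma betaKer_nonneg {α β t : ℝ} (h0 : 0 ≤ t) (h1 : t ≤ 1) :
    0 ≤ t ^ (α - 1) * (1 - t) ^ (β - 1) :=
  mul_nonneg (rpow_nonneg h0 _) (rpow_nonneg (by linarith) _)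

lemma incBeta_nonneg {x α β : ℝ} (hx0 : 0 ≤ x) (hx1 : x ≤ 1) : 0 ≤ incBeta x α β := by
  apply intervalIntegral.integral_nonneg hx0
  intro t ht
  exact betaKer_nonneg ht.1 (le_trans ht.2 hx1)

lemma betaKer_intInt' {α β : ℝ} (hα : 0 < α) (hβ : 0 < β) {x y : ℝ} (hx : 0 ≤ x) (hx1 : x ≤ 1)
    (hy : 0 ≤ y) (hy1 : y ≤ 1) :
    IntervalIntegrable (fun t : ℝ => t ^ (α - 1) * (1 - t) ^ (β - 1)) volume x y :=
  (betaKer_intInt hα hβ).mono_set (by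
    rw [uIcc_of_le (by norm_num : (0:ℝ) ≤ 1)]
    exact uIcc_subset_Icc ⟨hx, hx1⟩ ⟨hy, hy1⟩)

lemma incBeta_le {x α β : ℝ} (hα : 0 < α) (hβ : 0 < β) (hx0 : 0 ≤ x) (hx1 : x ≤ 1) :
    incBeta x α β ≤ incBeta 1 α β := by
  have hsplit := intervalIntegral.integral_add_adjacent_intervals
    (betaKer_intInt' hα hβ le_rfl zero_le_one hx0 hx1)
    (betaKer_intInt' hα hβ hx0 hx1 zero_le_one le_rfl)
  have htail : 0 ≤ ∫ t in x..(1:ℝ), t ^ (α - 1) * (1 - t) ^ (β - 1) := by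
    apply intervalIntegral.integral_nonneg hx1
    intro t ht
    exact betaKer_nonneg (le_trans hx0 ht.1) ht.2
  rw [incBeta, incBeta, ← hsplit]
  linarith


lemma sphereArea_pos {m : ℕ} (hm : 1 ≤ m) : 0 < sphereArea m := by
  have h : (0:ℝ) < (m:ℝ) / 2 := by
    have : (1:ℝ) ≤ (m:ℝ) := by exact_mod_cast hm
    linarith
  exact div_pos (by positivity) (Real.Gamma_pos_of_pos h)

lemma sphereArea_mul (k l : ℕ) (hk : 1 ≤ k) (hl : 1 ≤ l) :
    sphereArea k * sphereArea l * incBeta 1 ((k:ℝ)/2) ((l:ℝ)/2) = 2 * sphereArea (k+l) := by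
  have hk' : (0:ℝ) < (k:ℝ)/2 := by
    have : (1:ℝ) ≤ (k:ℝ) := by exact_mod_cast hk
    linarith
  have hl' : (0:ℝ) < (l:ℝ)/2 := by
    have : (1:ℝ) ≤ (l:ℝ) := by exact_mod_cast hl
    linarith
  rw [incBeta_one_eq hk' hl', sphereArea, sphereArea, sphereArea]
  have hsum : ((k+l : ℕ) : ℝ)/2 = (k:ℝ)/2 + (l:ℝ)/2 := by push_cast; ring
  rw [hsum]
  have hpi : Real.pi ^ ((k:ℝ)/2 + (l:ℝ)/2) = Real.pi ^ ((k:ℝ)/2) * Real.pi ^ ((l:ℝ)/2) :=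
    Real.rpow_add Real.pi_pos _ _
  rw [hpi]
  have g1 := Real.Gamma_pos_of_pos hk'
  have g2 := Real.Gamma_pos_of_pos hl'
  have g3 := Real.Gamma_pos_of_pos (add_pos hk' hl')
  field_simp

lemma incBeta_continuousOn {α β : ℝ} (hα : 0 < α) (hβ : 0 < β) :
    ContinuousOn (fun x => incBeta x α β) (Icc 0 1) := by
  have h := intervalIntegral.continuousOn_primitive (a := 0) (b := 1)
    (f := fun t : ℝ => t ^ (α - 1) * (1 - t) ^ (β - 1)) (μ := volume)
    ((integrableOn_Icc_iff_integrableOn_Ioc).mpr (betaKer_intInt hα hβ).1)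
  apply h.congr
  intro x hx
  simp only [incBeta]
  rw [intervalIntegral.integral_of_le hx.1]

lemma incBeta_hasDerivAt {α β x : ℝ} (hα : 0 < α) (hβ : 0 < β) (hx : x ∈ Ioo (0:ℝ) 1) :
    HasDerivAt (fun y => incBeta y α β) (x ^ (α - 1) * (1 - x) ^ (β - 1)) x := by
  apply intervalIntegral.integral_hasDerivAt_right
    (betaKer_intInt' hα hβ le_rfl zero_le_one hx.1.le hx.2.le)
  · apply StronglyMeasurable.stronglyMeasurableAtFilter
    apply Measurable.stronglyMeasurable
    fun_prop
  · apply ContinuousAt.mul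
    · exact Real.continuousAt_rpow_const _ _ (Or.inl hx.1.ne')
    · exact (Real.continuousAt_rpow_const _ _ (Or.inl (by linarith [hx.2] : 1 - x ≠ 0))).comp
        ((continuous_const.sub continuous_id).continuousAt)

lemma invsq_hasDeriv {x : ℝ} (hx : 0 < x) :
    HasDerivAt (fun y : ℝ => 1 / y ^ 2) (-2 / x ^ 3) x := by
  have h : HasDerivAt (fun y : ℝ => (y ^ 2)⁻¹) _ x := (hasDerivAt_pow 2 x).inv (by positivity)
  simp only [one_div]
  convert h using 1
  field_simp
  ring

lemma invsq_injOn : InjOn (fun y : ℝ => 1 / y ^ 2) (Ioi 1) := by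
  intro x hx y hy h
  simp only [mem_Ioi] at hx hy
  have hx0 : (0:ℝ) < x := by linarith
  have hy0 : (0:ℝ) < y := by linarith
  field_simp at h
  nlinarith

lemma invsq_image : (fun y : ℝ => 1 / y ^ 2) '' (Ioi 1) = Ioo 0 1 := by
  ext t
  constructor
  · rintro ⟨x, hx, rfl⟩
    simp only [mem_Ioi] at hx
    have hx2 : (1:ℝ) < x ^ 2 := by nlinarith
    constructor
    · positivity
    · rw [div_lt_one (by linarith)]; linarith
  · rintro ⟨ht0, ht1⟩
    refine ⟨1 / √t, ?_, ?_⟩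
    · simp only [mem_Ioi]
      rw [lt_div_iff₀ (Real.sqrt_pos.mpr ht0), one_mul]
      calc √t < √1 := by
            apply Real.sqrt_lt_sqrt ht0.le ht1
        _ = 1 := Real.sqrt_one
    · simp only
      rw [div_pow, one_pow, Real.sq_sqrt ht0.le]
      rw [one_div_one_div]

section Tail

variable {a b : ℝ} {m : ℕ}

lemma pow_shift {x : ℝ} (hx0 : 0 < x) (c : ℝ) (m : ℕ) :
    (1/x^2 : ℝ) ^ (c - (m:ℝ)/2 - 1) = x^m * (1/x^2) ^ (c-1) := by
  have e : (1/x^2 : ℝ) = x ^ (-2:ℝ) := by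
    rw [rpow_neg hx0.le, ← Real.rpow_natCast x 2]; norm_num
  rw [e, ← Real.rpow_natCast x m, ← rpow_mul hx0.le, ← rpow_mul hx0.le, ← rpow_add hx0]
  ring_nf

/-- The auxiliary function appearing after differentiating under the substitution. -/
noncomputable def wfun (a b : ℝ) (m : ℕ) (x : ℝ) : ℝ :=
  x ^ m * (1 / x ^ 3) * ((1/x^2) ^ (a-1) * (1 - 1/x^2) ^ (b - 1))

lemma invsq_hasDerivWithin : ∀ x ∈ Ioi (1:ℝ),
    HasDerivWithinAt (fun y : ℝ => 1 / y ^ 2) (-2 / x ^ 3) (Ioi 1) x :=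
  fun x hx => (invsq_hasDeriv (lt_trans one_pos hx)).hasDerivWithinAt

lemma subst_key (hb : 0 < b) : ∀ x ∈ Ioi (1:ℝ),
    |(-2 / x ^ 3)| • ((fun t : ℝ => t ^ (a - (m:ℝ)/2 - 1) * (1-t) ^ (b-1)) (1/x^2))
      = 2 * wfun a b m x := by
  intro x hx
  have hx0 : (0:ℝ) < x := lt_trans one_pos hx
  have habs : |(-2 / x ^ 3)| = 2 / x ^ 3 := by
    rw [abs_div, abs_neg, abs_two, abs_of_pos (by positivity : (0:ℝ) < x^3)]
  simp only [smul_eq_mul]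
  rw [habs, wfun, pow_shift hx0 a m]
  ring

lemma wfun_integrableOn (ha : 0 < a) (hb : 0 < b) (ham : (m:ℝ)/2 < a) :
    IntegrableOn (wfun a b m) (Ioi 1) volume := by
  have hα : 0 < a - (m:ℝ)/2 := by linarith
  have hg : IntegrableOn (fun t : ℝ => t ^ (a - (m:ℝ)/2 - 1) * (1-t) ^ (b-1)) (Ioo 0 1) volume := by
    have := (betaKer_intInt (α := a - (m:ℝ)/2) (β := b) hα hb).1
    rw [show a - (m:ℝ)/2 - 1 = a - (m:ℝ)/2 - 1 from rfl]
    exact this.mono_set Ioo_subset_Ioc_self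
  have hiff := integrableOn_image_iff_integrableOn_abs_deriv_smul measurableSet_Ioi
    invsq_hasDerivWithin invsq_injOn (fun t : ℝ => t ^ (a - (m:ℝ)/2 - 1) * (1-t) ^ (b-1))
  rw [invsq_image] at hiff
  have h2 := hiff.mp hg
  have h3 := h2.congr_fun (subst_key hb) measurableSet_Ioi
  have h4 : IntegrableOn (fun x => 2⁻¹ * (2 * wfun a b m x)) (Ioi 1) volume :=
    h3.const_mul (2⁻¹ : ℝ)
  exact h4.congr_fun (fun x _ => by ring) measurableSet_Ioi

lemma wfun_integral (ha : 0 < a) (hb : 0 < b) (ham : (m:ℝ)/2 < a) :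
    ∫ x in Ioi 1, wfun a b m x = (1/2) * incBeta 1 (a - (m:ℝ)/2) b := by
  have key := integral_image_eq_integral_abs_deriv_smul measurableSet_Ioi
    invsq_hasDerivWithin invsq_injOn (fun t : ℝ => t ^ (a - (m:ℝ)/2 - 1) * (1-t) ^ (b-1))
  rw [invsq_image] at key
  have hL : ∫ t in Ioo (0:ℝ) 1, t ^ (a - (m:ℝ)/2 - 1) * (1-t) ^ (b-1)
      = incBeta 1 (a - (m:ℝ)/2) b := by
    rw [incBeta, intervalIntegral.integral_of_le zero_le_one, integral_Ioc_eq_integral_Ioo]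
  have hR : ∫ x in Ioi (1:ℝ),
        |(-2 / x ^ 3)| • ((fun t : ℝ => t ^ (a - (m:ℝ)/2 - 1) * (1-t) ^ (b-1)) (1/x^2))
      = ∫ x in Ioi (1:ℝ), 2 * wfun a b m x :=
    setIntegral_congr_fun measurableSet_Ioi (subst_key hb)
  rw [hL, hR, MeasureTheory.integral_const_mul] at key
  linarith

lemma incBeta_bound (ha : 0 < a) (hb : 0 < b) {x : ℝ} (hx0 : 0 ≤ x) (hx : x ≤ 1/2) :
    incBeta x a b ≤ (max 1 ((1/2:ℝ) ^ (b-1))) * x ^ a / a := by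
  set Kb := max 1 ((1/2:ℝ) ^ (b-1)) with hKb
  have hker : ∀ t ∈ Icc 0 x, t^(a-1)*(1-t)^(b-1) ≤ Kb * t^(a-1) := by
    intro t ht
    have h1 : (1-t)^(b-1) ≤ Kb := by
      rcases le_or_gt 1 b with hb1 | hb1
      · exact le_trans (rpow_le_one (by linarith [ht.2]) (by linarith [ht.1]) (by linarith))
          (le_max_left _ _)
      · exact le_trans (rpow_le_rpow_of_nonpos one_half_pos (by linarith [ht.2]) (by linarith))
          (le_max_right _ _)
    calc t^(a-1)*(1-t)^(b-1) ≤ t^(a-1) * Kb :=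
          mul_le_mul_of_nonneg_left h1 (rpow_nonneg ht.1 _)
      _ = Kb * t^(a-1) := by ring
  have h1 : incBeta x a b ≤ ∫ t in (0:ℝ)..x, Kb * t^(a-1) := by
    apply intervalIntegral.integral_mono_on hx0
      (betaKer_intInt' ha hb le_rfl zero_le_one hx0 (by linarith))
      ((intervalIntegral.intervalIntegrable_rpow' (by linarith)).const_mul Kb)
    exact hker
  have h2 : ∫ t in (0:ℝ)..x, Kb * t^(a-1) = Kb * x ^ a / a := by
    rw [intervalIntegral.integral_const_mul, integral_rpow (Or.inl (by linarith))]
    rw [zero_rpow (by linarith : a - 1 + 1 ≠ 0)]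
    rw [show a - 1 + 1 = a from by ring]
    ring
  linarith [h1, h2 ▸ h1]

lemma incBeta_comp_contOn (ha : 0 < a) (hb : 0 < b) :
    ContinuousOn (fun x : ℝ => incBeta (1/x^2) a b) (Ici 1) := by
  apply (incBeta_continuousOn ha hb).comp
  · apply ContinuousOn.div continuousOn_const (continuous_pow 2).continuousOn
    intro x hx
    have : (1:ℝ) ≤ x := hx
    positivity
  · intro x hx
    have hx1 : (1:ℝ) ≤ x := hx
    have hx2 : (1:ℝ) ≤ x^2 := by nlinarith
    constructor
    · positivity
    · rw [div_le_one (by linarith)]; linarith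

/-- The tail integrand (without constants). -/
noncomputable def ftail (a b : ℝ) (m : ℕ) (x : ℝ) : ℝ :=
  (m:ℝ) * x ^ (m-1) * incBeta (1/x^2) a b

lemma ftail_contOn (ha : 0 < a) (hb : 0 < b) : ContinuousOn (ftail a b m) (Ici 1) := by
  apply ContinuousOn.mul _ (incBeta_comp_contOn ha hb)
  exact (continuous_const.mul (continuous_pow (m-1))).continuousOn

lemma npow_eq_rpow_sub (hm : 1 ≤ m) {x : ℝ} (hx0 : 0 < x) :
    x ^ (m - 1) = x ^ ((m:ℝ) - 1) := by
  rw [← Real.rpow_natCast x (m-1), Nat.cast_sub hm, Nat.cast_one]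

lemma invsq_rpow {x : ℝ} (hx0 : 0 < x) (c : ℝ) : ((1:ℝ)/x^2) ^ c = x ^ (-2*c) := by
  have e : (1/x^2 : ℝ) = x ^ (-2:ℝ) := by
    rw [rpow_neg hx0.le, ← Real.rpow_natCast x 2]; norm_num
  rw [e, ← rpow_mul hx0.le]

lemma ftail_bound (ha : 0 < a) (hb : 0 < b) (hm : 1 ≤ m) {x : ℝ} (hx : 2 ≤ x) :
    ftail a b m x ≤ ((m:ℝ) * (max 1 ((1/2:ℝ) ^ (b-1))) / a) * x ^ ((m:ℝ) - 1 - 2*a) := by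
  have hx0 : (0:ℝ) < x := by linarith
  have hx2 : (4:ℝ) ≤ x^2 := by nlinarith
  have hB := incBeta_bound ha hb (x := 1/x^2) (by positivity)
    (by rw [div_le_div_iff₀ (by linarith) (by norm_num)]; linarith)
  have hBnn : 0 ≤ incBeta (1/x^2) a b :=
    incBeta_nonneg (by positivity) (by rw [div_le_one (by linarith)]; nlinarith)
  rw [ftail]
  calc (m:ℝ) * x ^ (m-1) * incBeta (1/x^2) a b
      ≤ (m:ℝ) * x ^ (m-1) * ((max 1 ((1/2:ℝ) ^ (b-1))) * (1/x^2) ^ a / a) := by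
        apply mul_le_mul_of_nonneg_left hB (by positivity)
    _ = ((m:ℝ) * (max 1 ((1/2:ℝ) ^ (b-1))) / a) * x ^ ((m:ℝ) - 1 - 2*a) := by
        rw [npow_eq_rpow_sub hm hx0, invsq_rpow hx0 a,
          show (m:ℝ) - 1 - 2*a = ((m:ℝ) - 1) + (-2*a) from by ring,
          rpow_add hx0]
        ring

lemma ftail_nonneg (ha : 0 < a) (hb : 0 < b) {x : ℝ} (hx : 1 ≤ x) :
    0 ≤ ftail a b m x := by
  have hx0 : (0:ℝ) < x := by linarith
  have hx2 : (1:ℝ) ≤ x^2 := by nlinarith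
  apply mul_nonneg (by positivity)
  exact incBeta_nonneg (by positivity) (by rw [div_le_one (by linarith)]; linarith)

lemma ftail_integrableOn (ha : 0 < a) (hb : 0 < b) (hm : 1 ≤ m) (ham : (m:ℝ)/2 < a) :
    IntegrableOn (ftail a b m) (Ioi 1) volume := by
  have h1 : IntegrableOn (ftail a b m) (Ioc 1 2) volume :=
    (((ftail_contOn ha hb).mono (Icc_subset_Ici_self : Icc (1:ℝ) 2 ⊆ Ici 1)).integrableOn_Icc).mono_set
      Ioc_subset_Icc_self
  have h2 : IntegrableOn (ftail a b m) (Ioi 2) volume := by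
    have hdom : IntegrableOn
        (fun x : ℝ => ((m:ℝ) * (max 1 ((1/2:ℝ) ^ (b-1))) / a) * x ^ ((m:ℝ) - 1 - 2*a))
        (Ioi 2) volume := by
      apply Integrable.const_mul
      apply integrableOn_Ioi_rpow_of_lt _ two_pos
      have : (1:ℝ) ≤ (m:ℝ) := by exact_mod_cast hm
      linarith
    apply Integrable.mono hdom
    · apply ((ftail_contOn ha hb).mono _).aestronglyMeasurable measurableSet_Ioi
      intro x hx
      simp only [mem_Ioi, mem_Ici] at *
      linarith
    · rw [ae_restrict_iff' measurableSet_Ioi]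
      apply Filter.Eventually.of_forall
      intro x hx
      simp only [mem_Ioi] at hx
      have hnn := ftail_nonneg ha hb (m := m) (by linarith : (1:ℝ) ≤ x)
      rw [Real.norm_eq_abs, Real.norm_eq_abs, abs_of_nonneg hnn, abs_of_nonneg (by positivity)]
      exact ftail_bound ha hb hm hx.le
  have := h1.union h2
  rwa [Ioc_union_Ioi_eq_Ioi (by norm_num : (1:ℝ) ≤ 2)] at this

noncomputable def Ffun (a b : ℝ) (m : ℕ) (x : ℝ) : ℝ := x ^ m * incBeta (1/x^2) a b

lemma Ffun_contOn (ha : 0 < a) (hb : 0 < b) : ContinuousOn (Ffun a b m) (Ici 1) :=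
  (continuous_pow m).continuousOn.mul (incBeta_comp_contOn ha hb)

lemma Ffun_tendsto (ha : 0 < a) (hb : 0 < b) (ham : (m:ℝ)/2 < a) :
    Filter.Tendsto (Ffun a b m) Filter.atTop (nhds 0) := by
  set Kb := max 1 ((1/2:ℝ) ^ (b-1)) with hKb
  apply squeeze_zero' (g := fun x => (Kb / a) * x ^ (-(2*a - (m:ℝ))))
  · filter_upwards [Filter.eventually_ge_atTop (1:ℝ)] with x hx
    have hx0 : (0:ℝ) < x := by linarith
    have hx2 : (1:ℝ) ≤ x^2 := by nlinarith
    exact mul_nonneg (by positivity)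
      (incBeta_nonneg (by positivity) (by rw [div_le_one (by linarith)]; linarith))
  · filter_upwards [Filter.eventually_ge_atTop (2:ℝ)] with x hx
    have hx0 : (0:ℝ) < x := by linarith
    have hx2 : (4:ℝ) ≤ x^2 := by nlinarith
    have hB := incBeta_bound ha hb (x := 1/x^2) (by positivity)
      (by rw [div_le_div_iff₀ (by linarith) (by norm_num)]; linarith)
    calc Ffun a b m x ≤ x ^ m * (Kb * (1/x^2) ^ a / a) :=
          mul_le_mul_of_nonneg_left hB (by positivity)
      _ = (Kb / a) * x ^ (-(2*a - (m:ℝ))) := by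
          rw [← Real.rpow_natCast x m, invsq_rpow hx0 a,
            show -(2*a - (m:ℝ)) = (m:ℝ) + (-2*a) from by ring, rpow_add hx0]
          ring
  · have h0 := tendsto_rpow_neg_atTop (by linarith : (0:ℝ) < 2*a - (m:ℝ))
    have := h0.const_mul (Kb / a)
    simpa using this

lemma Ffun_hasDerivAt (ha : 0 < a) (hb : 0 < b) (hm : 1 ≤ m) :
    ∀ x ∈ Ioi (1:ℝ), HasDerivAt (Ffun a b m) (ftail a b m x - 2 * wfun a b m x) x := by
  intro x hx
  have hx1 : (1:ℝ) < x := hx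
  have hx0 : (0:ℝ) < x := by linarith
  have hx2 : (1:ℝ) < x^2 := by nlinarith
  have hmem : (1/x^2 : ℝ) ∈ Ioo (0:ℝ) 1 :=
    ⟨by positivity, by rw [div_lt_one (by linarith)]; linarith⟩
  have hB : HasDerivAt (fun y : ℝ => incBeta (1/y^2) a b)
      (((1/x^2) ^ (a-1) * (1-1/x^2) ^ (b-1)) * (-2/x^3)) x :=
    by have := (incBeta_hasDerivAt ha hb hmem).comp x (invsq_hasDeriv hx0); exact this
  have hP : HasDerivAt (fun y : ℝ => y ^ m * incBeta (1/y^2) a b) _ x := (hasDerivAt_pow m x).mul hB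
  have : Ffun a b m = fun y : ℝ => y ^ m * incBeta (1/y^2) a b := rfl
  rw [this]
  convert hP using 1
  rw [ftail, wfun, npow_eq_rpow_sub hm hx0]
  field_simp
  ring

lemma ftail_integral (ha : 0 < a) (hb : 0 < b) (hm : 1 ≤ m) (ham : (m:ℝ)/2 < a) :
    ∫ x in Ioi 1, ftail a b m x = incBeta 1 (a - (m:ℝ)/2) b - incBeta 1 a b := by
  have hFt := ftail_integrableOn ha hb hm ham
  have hW := wfun_integrableOn ha hb ham
  have hW2 : IntegrableOn (fun x => 2 * wfun a b m x) (Ioi 1) volume := hW.const_mul 2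
  have hsub : IntegrableOn (fun x => ftail a b m x - 2 * wfun a b m x) (Ioi 1) volume :=
    hFt.sub hW2
  have key := integral_Ioi_of_hasDerivAt_of_tendsto
    ((Ffun_contOn ha hb).continuousWithinAt (self_mem_Ici))
    (Ffun_hasDerivAt ha hb hm) hsub (Ffun_tendsto ha hb ham)
  have hF1 : Ffun a b m 1 = incBeta 1 a b := by
    rw [Ffun]; norm_num
  rw [hF1] at key
  have hsplit : ∫ x in Ioi (1:ℝ), (ftail a b m x - 2 * wfun a b m x)
      = (∫ x in Ioi (1:ℝ), ftail a b m x) - ∫ x in Ioi (1:ℝ), 2 * wfun a b m x :=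
    MeasureTheory.integral_sub hFt hW2
  rw [hsplit, MeasureTheory.integral_const_mul, wfun_integral ha hb ham] at key
  linarith

end Tail

/-- The density `f_{n,q,γ}` of `d(o, E ∩ L)`. -/
noncomputable def distDensity (n q γ : ℕ) (δ : ℝ) : ℝ :=
  if δ < 0 then 0
  else if δ ≤ 1 then
    ((q : ℝ) - γ) * (sphereArea (γ + 1) * sphereArea (n - q) /
        sphereArea (n - (q - γ) + 1)) *
      (sphereArea (n + 1) / (sphereArea (q + 1) * sphereArea (n - q))) * δ ^ (q - γ - 1)
  else
    ((q : ℝ) - γ) * (sphereArea (γ + 1) * sphereArea (n - q) /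
        sphereArea (n - (q - γ) + 1)) * (1 / 2) * δ ^ (q - γ - 1) *
      incBeta (1 / δ ^ 2) (((q : ℝ) + 1) / 2) (((n : ℝ) - q) / 2)

theorem distDensity_is_probability_density (n q γ : ℕ)
    (hn : 2 ≤ n) (hq1 : 1 ≤ q) (hq2 : q ≤ n - 1) (hγ : γ ≤ q - 1) :
    (∀ δ : ℝ, 0 ≤ distDensity n q γ δ) ∧ (∫ δ : ℝ, distDensity n q γ δ) = 1 := by
  -- basic numerology
  have hγq : γ ≤ q := by omega
  have hqn : q + 1 ≤ n := by omega
  have hm : 1 ≤ q - γ := by omega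
  set a : ℝ := ((q : ℝ) + 1) / 2 with ha_def
  set b : ℝ := ((n : ℝ) - q) / 2 with hb_def
  have hnq : (q:ℝ) + 1 ≤ (n:ℝ) := by exact_mod_cast hqn
  have ha : 0 < a := by rw [ha_def]; positivity
  have hb : 0 < b := by rw [hb_def]; have : (0:ℝ) < (n:ℝ) - q := by linarith
                        positivity
  have hcast : ((q - γ : ℕ) : ℝ) = (q:ℝ) - γ := by
    rw [Nat.cast_sub hγq]
  have ham : ((q - γ : ℕ) : ℝ)/2 < a := by
    rw [hcast, ha_def]
    have : (0:ℝ) ≤ (γ:ℝ) := by positivity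
    linarith
  -- constants
  set C : ℝ := sphereArea (γ + 1) * sphereArea (n - q) / sphereArea (n - (q - γ) + 1) with hC_def
  set K : ℝ := sphereArea (n + 1) / (sphereArea (q + 1) * sphereArea (n - q)) with hK_def
  have s1 := sphereArea_pos (m := γ + 1) (by omega)
  have s2 := sphereArea_pos (m := n - q) (by omega)
  have s3 := sphereArea_pos (m := n - (q - γ) + 1) (by omega)
  have s4 := sphereArea_pos (m := n + 1) (by omega)
  have s5 := sphereArea_pos (m := q + 1) (by omega)
  have hCpos : 0 < C := by rw [hC_def]; positivity
  have hKpos : 0 < K := by rw [hK_def]; positivity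
  set Bf : ℝ := incBeta 1 a b with hBf_def
  set A : ℝ := incBeta 1 (a - ((q - γ : ℕ) : ℝ)/2) b with hA_def
  -- beta identities
  have e1 : sphereArea (q+1) * sphereArea (n-q) * Bf = 2 * sphereArea (n+1) := by
    have := sphereArea_mul (q+1) (n-q) (by omega) (by omega)
    rw [show ((q+1:ℕ):ℝ)/2 = a from by rw [ha_def]; push_cast; ring,
      show ((n-q:ℕ):ℝ)/2 = b from by rw [hb_def, Nat.cast_sub (by omega)],
      show (q+1) + (n-q) = n + 1 from by omega] at this
    exact this
  have e2 : sphereArea (γ+1) * sphereArea (n-q) * A = 2 * sphereArea (n - (q - γ) + 1) := by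
    have := sphereArea_mul (γ+1) (n-q) (by omega) (by omega)
    rw [show ((γ+1:ℕ):ℝ)/2 = a - ((q - γ : ℕ) : ℝ)/2 from by
        rw [ha_def, hcast]; push_cast; ring,
      show ((n-q:ℕ):ℝ)/2 = b from by rw [hb_def, Nat.cast_sub (by omega)],
      show (γ+1) + (n-q) = n - (q - γ) + 1 from by omega] at this
    exact this
  have hK : K = Bf / 2 := by
    rw [hK_def]
    field_simp
    linarith [e1]
  have hCA : C * A = 2 := by
    rw [hC_def]
    field_simp
    linarith [e2]
  constructor
  · -- nonnegativity
    intro δ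
    rw [distDensity]
    have hqγ : (0:ℝ) ≤ (q:ℝ) - γ := by rw [← hcast]; positivity
    have hC' : (0:ℝ) ≤ sphereArea (γ + 1) * sphereArea (n - q) / sphereArea (n - (q - γ) + 1) :=
      div_nonneg (mul_nonneg s1.le s2.le) s3.le
    split_ifs with h1 h2
    · exact le_rfl
    · have hδ0 : 0 ≤ δ := not_lt.mp h1
      exact mul_nonneg (mul_nonneg (mul_nonneg hqγ hC')
        (div_nonneg s4.le (mul_nonneg s5.le s2.le))) (pow_nonneg hδ0 _)
    · have hδ1 : 1 < δ := not_le.mp h2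
      have hδ0 : (0:ℝ) < δ := by linarith
      have hδ2 : (1:ℝ) ≤ δ^2 := by nlinarith
      refine mul_nonneg (mul_nonneg (mul_nonneg (mul_nonneg hqγ hC') (by norm_num))
        (pow_nonneg hδ0.le _)) (incBeta_nonneg (by positivity) ?_)
      rw [div_le_one (by linarith)]; linarith
  · -- the integral
    have hzero : ∀ x : ℝ, x ∉ Ici (0:ℝ) → distDensity n q γ x = 0 := by
      intro x hx
      rw [mem_Ici, not_le] at hx
      rw [distDensity, if_pos hx]
    -- identification on (0,1]
    have heq1 : EqOn (distDensity n q γ)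
        (fun δ : ℝ => ((q:ℝ) - γ) * C * K * δ ^ (q - γ - 1)) (Ioc 0 1) := by
      intro δ hδ
      rw [distDensity, if_neg (not_lt.mpr hδ.1.le), if_pos hδ.2, hC_def, hK_def]
    -- identification on (1,∞)
    have heq2 : EqOn (distDensity n q γ)
        (fun δ : ℝ => (C/2) * ftail a b (q - γ) δ) (Ioi 1) := by
      intro δ hδ
      rw [mem_Ioi] at hδ
      simp only [distDensity, ftail]
      rw [if_neg (by push_neg; linarith), if_neg (not_le.mpr hδ), hcast, hC_def]
      ring
    have hint1 : IntegrableOn (distDensity n q γ) (Ioc 0 1) volume := by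
      have hcont : Continuous (fun δ : ℝ => ((q:ℝ) - γ) * C * K * δ ^ (q - γ - 1)) := by
        fun_prop
      exact (hcont.integrableOn_Ioc).congr_fun heq1.symm measurableSet_Ioc
    have hint2 : IntegrableOn (distDensity n q γ) (Ioi 1) volume := by
      have h0 : IntegrableOn (fun δ : ℝ => (C/2) * ftail a b (q - γ) δ) (Ioi 1) volume :=
        (ftail_integrableOn ha hb hm ham).const_mul (C/2)
      exact h0.congr_fun heq2.symm measurableSet_Ioi
    have hv1 : ∫ δ in Ioc (0:ℝ) 1, distDensity n q γ δ = C * K := by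
      rw [setIntegral_congr_fun measurableSet_Ioc heq1,
        ← intervalIntegral.integral_of_le zero_le_one]
      rw [intervalIntegral.integral_const_mul, integral_pow]
      have : ((q - γ - 1 : ℕ) : ℝ) + 1 = ((q - γ : ℕ) : ℝ) := by
        push_cast [Nat.cast_sub hm, Nat.cast_sub hγq]
        ring
      rw [one_pow, zero_pow (by omega : q - γ - 1 + 1 ≠ 0), this, hcast]
      have hqγ0 : (0:ℝ) < (q:ℝ) - γ := by
        rw [← hcast]
        exact_mod_cast hm
      field_simp
      ring
    have hv2 : ∫ δ in Ioi (1:ℝ), distDensity n q γ δ = (C/2) * (A - Bf) := by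
      rw [setIntegral_congr_fun measurableSet_Ioi heq2, MeasureTheory.integral_const_mul,
        ftail_integral ha hb hm ham, ← hA_def, ← hBf_def]
    calc (∫ δ : ℝ, distDensity n q γ δ)
        = ∫ δ in Ici (0:ℝ), distDensity n q γ δ :=
          (setIntegral_eq_integral_of_forall_compl_eq_zero hzero).symm
      _ = ∫ δ in Ioi (0:ℝ), distDensity n q γ δ := integral_Ici_eq_integral_Ioi
      _ = (∫ δ in Ioc (0:ℝ) 1, distDensity n q γ δ) + ∫ δ in Ioi (1:ℝ), distDensity n q γ δ := by
          rw [← Ioc_union_Ioi_eq_Ioi zero_le_one,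
            setIntegral_union (Ioc_disjoint_Ioi le_rfl) measurableSet_Ioi hint1 hint2]
      _ = C * K + (C/2) * (A - Bf) := by rw [hv1, hv2]
      _ = 1 := by
          rw [hK]
          linear_combination hCA / 2
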